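/- arXiv:2007.02212 — 3 statements merged into one kernel-verified Lean document; each statement's English description precedes it below -/
import Mathlib

section
/- Let d ≥ 1 be an integer and α ∈ (0,2) with d + α > 2. For all x, y ∈ ℝ^d with ⟨x, y⟩ ≥ 0 and x ≠ y, one has |x−y|^{−(d+α−2)} − |x+y|^{−(d+α−2)} ≤ 2(d+α−2) ⟨x, y⟩ |x−y|^{−(d+α)}. -/
/-!
With `a = ‖x - y‖` and `b = ‖x + y‖` we have `b² - a² = 4⟪x, y⟫ ≥ 0`, so `a ≤ b`.
Since the derivative `-p t^(-p-1)` of `t ↦ t^(-p)` is at least `-p a^(-p-1)` on `[a, ∞)`,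
the mean value theorem gives `a^(-p) - b^(-p) ≤ p (b - a) a^(-p-1)`, and
`2 (b - a) a ≤ b² - a² = 4⟪x, y⟫` finishes the estimate.
-/

open Real
open scoped RealInnerProductSpace

lemma Real.rpow_neg_sub_rpow_neg_le {p a b : ℝ} (hp : 0 ≤ p) (ha : 0 < a) (hab : a ≤ b) :
    a ^ (-p) - b ^ (-p) ≤ p * (b - a) * a ^ (-p - 1) := by
  have hcont : ContinuousOn (fun t : ℝ => t ^ (-p)) (Set.Ici a) := fun t ht =>
    (continuousAt_rpow_const t (-p) (Or.inl (ha.trans_le ht).ne')).continuousWithinAt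
  have hdiff : DifferentiableOn ℝ (fun t : ℝ => t ^ (-p)) (interior (Set.Ici a)) := by
    rw [interior_Ici]
    exact fun t ht =>
      (differentiableAt_rpow_const_of_ne (-p) (ha.trans ht).ne').differentiableWithinAt
  have hderiv : ∀ t ∈ interior (Set.Ici a),
      -p * a ^ (-p - 1) ≤ deriv (fun t : ℝ => t ^ (-p)) t := by
    rw [interior_Ici]
    intro t ht
    rw [deriv_rpow_const, neg_mul, neg_mul, neg_le_neg_iff]
    exact mul_le_mul_of_nonneg_left (rpow_le_rpow_of_nonpos ha ht.le (by linarith)) hp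
  have := (convex_Ici a).mul_sub_le_image_sub_of_le_deriv hcont hdiff hderiv
    a Set.self_mem_Ici b hab hab
  linarith

section InnerProductSpace

variable {E : Type*} [NormedAddCommGroup E] [InnerProductSpace ℝ E]

lemma norm_add_sq_sub_norm_sub_sq_real (x y : E) : ‖x + y‖ ^ 2 - ‖x - y‖ ^ 2 = 4 * ⟪x, y⟫ := by
  rw [norm_add_sq_real, norm_sub_sq_real]
  ring

lemma norm_sub_le_norm_add_of_inner_nonneg {x y : E} (hxy : 0 ≤ ⟪x, y⟫) : ‖x - y‖ ≤ ‖x + y‖ :=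
  (pow_le_pow_iff_left₀ (norm_nonneg _) (norm_nonneg _) two_ne_zero).mp
    (by linarith [norm_add_sq_sub_norm_sub_sq_real x y])

lemma norm_sub_rpow_neg_sub_norm_add_rpow_neg_le {p : ℝ} (hp : 0 ≤ p) {x y : E}
    (hxy : 0 ≤ ⟪x, y⟫) (hne : x ≠ y) :
    ‖x - y‖ ^ (-p) - ‖x + y‖ ^ (-p) ≤ 2 * p * ⟪x, y⟫ * ‖x - y‖ ^ (-(p + 2)) := by
  set a := ‖x - y‖
  set b := ‖x + y‖
  have ha : 0 < a := norm_pos_iff.mpr (sub_ne_zero.mpr hne)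
  have hab : a ≤ b := norm_sub_le_norm_add_of_inner_nonneg hxy
  have hgap : (b - a) * a ≤ 2 * ⟪x, y⟫ := by
    nlinarith [norm_add_sq_sub_norm_sub_sq_real x y]
  have hsplit : a ^ (-p - 1) = a * a ^ (-(p + 2)) := by
    rw [show -p - 1 = 1 + -(p + 2) by ring, rpow_add ha, rpow_one]
  calc a ^ (-p) - b ^ (-p) ≤ p * (b - a) * a ^ (-p - 1) := rpow_neg_sub_rpow_neg_le hp ha hab
    _ = p * ((b - a) * a) * a ^ (-(p + 2)) := by rw [hsplit]; ring
    _ ≤ p * (2 * ⟪x, y⟫) * a ^ (-(p + 2)) := by gcongr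
    _ = 2 * p * ⟪x, y⟫ * a ^ (-(p + 2)) := by ring

end InnerProductSpace

theorem stmt_5_general (d : ℕ) (α : ℝ)
    (hdα : 2 < (d : ℝ) + α)
    (x y : EuclideanSpace ℝ (Fin d)) (hxy : 0 ≤ ⟪x, y⟫) (hne : x ≠ y) :
    ‖x - y‖ ^ (-((d : ℝ) + α - 2)) - ‖x + y‖ ^ (-((d : ℝ) + α - 2)) ≤
      2 * ((d : ℝ) + α - 2) * ⟪x, y⟫ * ‖x - y‖ ^ (-((d : ℝ) + α)) := by
  have h := norm_sub_rpow_neg_sub_norm_add_rpow_neg_le (p := (d : ℝ) + α - 2) (by linarith) hxy hne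
  rwa [show -((d : ℝ) + α - 2 + 2) = -((d : ℝ) + α) by ring] at h

theorem stmt_5 (d : ℕ) (hd : 1 ≤ d) (α : ℝ) (hα : α ∈ Set.Ioo (0 : ℝ) 2)
    (hdα : 2 < (d : ℝ) + α)
    (x y : EuclideanSpace ℝ (Fin d)) (hxy : 0 ≤ ⟪x, y⟫) (hne : x ≠ y) :
    ‖x - y‖ ^ (-((d : ℝ) + α - 2)) - ‖x + y‖ ^ (-((d : ℝ) + α - 2)) ≤
      2 * ((d : ℝ) + α - 2) * ⟪x, y⟫ * ‖x - y‖ ^ (-((d : ℝ) + α)) :=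
  stmt_5_general d α hdα x y hxy hne
end

section
/- Let d ≥ 1 be an integer and α ∈ (0,2) with d + α > 2. For all x, y ∈ ℝ^d with ⟨x, y⟩ ≥ 0 and x ≠ y, one has |x−y|^{−(d+α−2)} − |x+y|^{−(d+α−2)} ≥ 2(d+α−2) (|x|² + |y|²)^{−(d+α)/2} ⟨x, y⟩. -/
open scoped RealInnerProductSpace

/-!
With `s = ‖x‖² + ‖y‖²` and `c = ⟪x, y⟫` we have `‖x ∓ y‖² = s ∓ 2c`, so with `p = (d + α - 2) / 2`
the claim is `4 p s^(-p-1) c ≤ (s - 2c)^(-p) - (s + 2c)^(-p)`. The right-hand side is the increment of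
`g(t) = (s - t)^(-p) - (s + t)^(-p)` over `[0, 2c]`, and
`g'(t) = p ((s - t)^(-p-1) + (s + t)^(-p-1)) ≥ 2 p ((s - t)(s + t))^(-(p+1)/2) ≥ 2 p s^(-p-1)`
by AM-GM and `(s - t)(s + t) ≤ s²`; the mean value inequality concludes.
-/

namespace Real

lemma rpow_eq_sq_rpow_half {a : ℝ} (ha : 0 ≤ a) (r : ℝ) : a ^ r = (a ^ 2) ^ (r / 2) := by
  rw [← rpow_natCast, ← rpow_mul ha]
  congr 1
  ring

lemma two_mul_rpow_neg_le_rpow_neg_add_rpow_neg {u v s q : ℝ} (hu : 0 < u) (hv : 0 < v)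
    (hs : 0 < s) (huv : u * v ≤ s ^ 2) (hq : 0 ≤ q) :
    2 * s ^ (-q) ≤ u ^ (-q) + v ^ (-q) := by
  have hu_sq : u ^ (-q) = u ^ (-q / 2) * u ^ (-q / 2) := by rw [← rpow_add hu]; ring_nf
  have hv_sq : v ^ (-q) = v ^ (-q / 2) * v ^ (-q / 2) := by rw [← rpow_add hv]; ring_nf
  have h_geom : s ^ (-q) ≤ u ^ (-q / 2) * v ^ (-q / 2) := by
    rw [← mul_rpow hu.le hv.le, rpow_eq_sq_rpow_half hs.le]
    exact rpow_le_rpow_of_nonpos (by positivity) huv (by linarith)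
  nlinarith [sq_nonneg (u ^ (-q / 2) - v ^ (-q / 2))]

lemma hasDerivAt_rpow_neg_sub_sub_rpow_neg_add {s t p : ℝ} (hst : 0 < s - t) (hst' : 0 < s + t) :
    HasDerivAt (fun u ↦ (s - u) ^ (-p) - (s + u) ^ (-p))
      (p * (s - t) ^ (-p - 1) + p * (s + t) ^ (-p - 1)) t := by
  have h := ((((hasDerivAt_id' t).const_sub s).rpow_const (p := -p) (Or.inl hst.ne')).sub
    (((hasDerivAt_id' t).const_add s).rpow_const (p := -p) (Or.inl hst'.ne')))
  exact h.congr_deriv (by ring)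

lemma mul_le_rpow_neg_sub_sub_rpow_neg_add {p s t : ℝ} (hp : 0 ≤ p) (ht : 0 ≤ t) (hts : t < s) :
    2 * p * s ^ (-p - 1) * t ≤ (s - t) ^ (-p) - (s + t) ^ (-p) := by
  have hs : 0 < s := by linarith
  have hderiv : ∀ u ∈ Set.Ioo (-s) s, HasDerivAt (fun u ↦ (s - u) ^ (-p) - (s + u) ^ (-p))
      (p * (s - u) ^ (-p - 1) + p * (s + u) ^ (-p - 1)) u := fun u hu ↦
    hasDerivAt_rpow_neg_sub_sub_rpow_neg_add (by linarith [hu.2]) (by linarith [hu.1])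
  have hderiv_ge : ∀ u ∈ interior (Set.Ioo (-s) s),
      2 * p * s ^ (-p - 1) ≤ deriv (fun u ↦ (s - u) ^ (-p) - (s + u) ^ (-p)) u := by
    intro u hu
    rw [interior_Ioo] at hu
    have hAMGM := two_mul_rpow_neg_le_rpow_neg_add_rpow_neg (q := p + 1)
      (by linarith [hu.2] : 0 < s - u) (by linarith [hu.1] : 0 < s + u) hs
      (by nlinarith [sq_nonneg u]) (by linarith)
    rw [neg_add'] at hAMGM
    rw [(hderiv u hu).deriv]
    linarith [mul_le_mul_of_nonneg_left hAMGM hp]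
  simpa using (convex_Ioo (-s) s).mul_sub_le_image_sub_of_le_deriv
    (fun u hu ↦ (hderiv u hu).continuousAt.continuousWithinAt)
    (fun u hu ↦ (hderiv u (interior_subset hu)).differentiableAt.differentiableWithinAt)
    hderiv_ge 0 (by simp [hs]) t ⟨by linarith, hts⟩ ht

end Real

theorem two_mul_mul_rpow_mul_inner_le_norm_sub_rpow_sub_norm_add_rpow {E : Type*}
    [NormedAddCommGroup E] [InnerProductSpace ℝ E] {q : ℝ} (hq : 0 ≤ q) {x y : E}
    (hxy : 0 ≤ ⟪x, y⟫) (hne : x ≠ y) :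
    2 * q * (‖x‖ ^ 2 + ‖y‖ ^ 2) ^ (-(q + 2) / 2) * ⟪x, y⟫ ≤
      ‖x - y‖ ^ (-q) - ‖x + y‖ ^ (-q) := by
  have hsub : ‖x - y‖ ^ 2 = ‖x‖ ^ 2 + ‖y‖ ^ 2 - 2 * ⟪x, y⟫ := by rw [norm_sub_sq_real]; ring
  have hadd : ‖x + y‖ ^ 2 = ‖x‖ ^ 2 + ‖y‖ ^ 2 + 2 * ⟪x, y⟫ := by rw [norm_add_sq_real]; ring
  have hpos : 0 < ‖x - y‖ ^ 2 := pow_pos (norm_pos_iff.2 (sub_ne_zero.2 hne)) 2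
  have key := Real.mul_le_rpow_neg_sub_sub_rpow_neg_add (p := q / 2) (by positivity)
    (by positivity : 0 ≤ 2 * ⟪x, y⟫) (by linarith : 2 * ⟪x, y⟫ < ‖x‖ ^ 2 + ‖y‖ ^ 2)
  rw [Real.rpow_eq_sq_rpow_half (norm_nonneg (x - y)),
    Real.rpow_eq_sq_rpow_half (norm_nonneg (x + y)), hsub, hadd,
    show -(q + 2) / 2 = -(q / 2) - 1 by ring, neg_div]
  linarith

theorem stmt_6_general (d : ℕ) (α : ℝ)
    (hdα : 2 < (d : ℝ) + α)
    (x y : EuclideanSpace ℝ (Fin d)) (hxy : 0 ≤ ⟪x, y⟫) (hne : x ≠ y) :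
    2 * ((d : ℝ) + α - 2) * (‖x‖ ^ 2 + ‖y‖ ^ 2) ^ (-((d : ℝ) + α) / 2) * ⟪x, y⟫ ≤
      ‖x - y‖ ^ (-((d : ℝ) + α - 2)) - ‖x + y‖ ^ (-((d : ℝ) + α - 2)) := by
  have h := two_mul_mul_rpow_mul_inner_le_norm_sub_rpow_sub_norm_add_rpow
    (q := (d : ℝ) + α - 2) (by linarith) hxy hne
  rwa [sub_add_cancel] at h

theorem stmt_6 (d : ℕ) (hd : 1 ≤ d) (α : ℝ) (hα : α ∈ Set.Ioo (0 : ℝ) 2)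
    (hdα : 2 < (d : ℝ) + α)
    (x y : EuclideanSpace ℝ (Fin d)) (hxy : 0 ≤ ⟪x, y⟫) (hne : x ≠ y) :
    2 * ((d : ℝ) + α - 2) * (‖x‖ ^ 2 + ‖y‖ ^ 2) ^ (-((d : ℝ) + α) / 2) * ⟪x, y⟫ ≤
      ‖x - y‖ ^ (-((d : ℝ) + α - 2)) - ‖x + y‖ ^ (-((d : ℝ) + α - 2)) :=
  stmt_6_general d α hdα x y hxy hne
end

section
/- Let α ∈ (0,1] and let V ∈ C²(ℝ) be such that e^{−V} ∈ L¹(ℝ; dx) ∩ C_b²(ℝ). Suppose that limsup_{|x|→∞} |x|³ e^{−V(x)} |V'(x)² − V''(x)| < ∞. Then the function u ↦ (−Δ)^{α/2} e^{−V(u)} is integrable on ℝ, i.e., ∫_ℝ |(−Δ)^{α/2} e^{−V(u)}| du < ∞; in particular, for every x ∈ ℝ the integral ∫_{−∞}^x (−Δ)^{α/2} e^{−V(u)} du is finite, so the one-dimensional fractional drift b(x) := −e^{V(x)} ∫_{−∞}^x (−Δ)^{α/2} e^{−V(u)} du is well defined. -/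
/-!
For `|z| ≤ 1` the integrand of `(-Δ)^{α/2} g (x)` is a second-order Taylor remainder of `g` at `x`,
whose `L¹` norm in `x` is at most `z² ‖g''‖₁`; for `|z| > 1` it is a difference of two translates
of `g`, with `L¹` norm at most `2 ‖g‖₁`. Against the weight `|z|^{-(1+α)}` both bounds are
integrable in `z` when `0 < α < 2`, so by Tonelli the integrand is integrable on `ℝ × ℝ`, and
Fubini makes `x ↦ (-Δ)^{α/2} g (x)` integrable. For `g = e^{-V}` one has
`g'' = e^{-V} (V'² - V'')`, which is `O(|x|^{-3})` by hypothesis, hence integrable.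
-/

open MeasureTheory Real Filter

/-- The constant `c_{1,α} = 2^α Γ((1+α)/2)/(π^{1/2} |Γ(-α/2)|)`. -/
noncomputable def fracC (α : ℝ) : ℝ :=
  2 ^ α * Real.Gamma ((1 + α) / 2) / (Real.pi ^ ((1 : ℝ) / 2) * |Real.Gamma (-α / 2)|)

/-- The one-dimensional fractional Laplacian `(-Δ)^{α/2} g`, defined so that
`-(-Δ)^{α/2} g (x) = c_{1,α} ∫ (g(x+z) - g(x) - g'(x) z 1_{|z|≤1}) |z|^{-(1+α)} dz`. -/
noncomputable def fracLap1 (α : ℝ) (g : ℝ → ℝ) (x : ℝ) : ℝ :=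
  -(fracC α *
    ∫ z : ℝ, (g (x + z) - g x - deriv g x * z * (if |z| ≤ 1 then 1 else 0)) * |z| ^ (-(1 + α)))

/-- The one-dimensional fractional drift
`b(x) = -e^{V(x)} ∫_{-∞}^x (-Δ)^{α/2} e^{-V(u)} du`. -/
noncomputable def fracDrift1 (α : ℝ) (V : ℝ → ℝ) (x : ℝ) : ℝ :=
  -Real.exp (V x) * ∫ u in Set.Iic x, fracLap1 α (fun y => Real.exp (-(V y))) u

open scoped Interval

lemma integrableOn_abs_rpow_le_one {s : ℝ} (hs : -1 < s) :
    IntegrableOn (fun z : ℝ => |z| ^ s) {z | |z| ≤ 1} := by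
  have hball : IntegrableOn (fun z : ℝ => |z| ^ s) (Metric.ball 0 2) :=
    integrableOn_ball_of_norm_le_rpow (C := 1) (α := -s) (by simp) (by simp; linarith)
      (ae_of_all _ fun z => by simp [abs_of_nonneg (rpow_nonneg (abs_nonneg z) s)])
      (continuous_abs.measurable.pow_const s).aestronglyMeasurable
  exact hball.mono_set fun z (hz : |z| ≤ 1) => by simp; linarith

lemma integrableOn_abs_rpow_one_lt {s : ℝ} (hs : s < -1) :
    IntegrableOn (fun z : ℝ => |z| ^ s) {z | 1 < |z|} := by
  refine (((integrable_one_add_norm (E := ℝ) (μ := volume) (r := -s) (by simp; linarith)).const_mul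
    (2 ^ (-s))).integrableOn).mono' (continuous_abs.measurable.pow_const s).aestronglyMeasurable ?_
  refine (ae_restrict_iff' (measurableSet_lt measurable_const continuous_abs.measurable)).2
    (ae_of_all _ fun z (hz : 1 < |z|) => ?_)
  calc ‖|z| ^ s‖ = |z| ^ s := by simp [abs_of_nonneg (rpow_nonneg (abs_nonneg z) s)]
    _ = 2 ^ (-s) * (2 * |z|) ^ s := by
      rw [mul_rpow (by norm_num) (abs_nonneg z), ← mul_assoc, ← rpow_add (by norm_num)]; simp
    _ ≤ 2 ^ (-s) * (1 + ‖z‖) ^ (-(-s)) := by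
      rw [neg_neg, norm_eq_abs]
      exact mul_le_mul_of_nonneg_left (rpow_le_rpow_of_nonpos (by positivity) (by linarith)
        (by linarith)) (by positivity)

lemma integrable_of_abs_rpow_mul_abs_le {f : ℝ → ℝ} (hf : Continuous f) {p : ℝ} (hp : 1 < p)
    {M R : ℝ} (hM : ∀ x, R ≤ |x| → |x| ^ p * |f x| ≤ M) : Integrable f := by
  refine hf.locallyIntegrable.integrable_of_isBigO_cocompact (g := fun x => |x| ^ (-p)) ?_
    ⟨_, tendsto_norm_cocompact_atTop.eventually_gt_atTop 1,
      integrableOn_abs_rpow_one_lt (by linarith)⟩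
  refine Asymptotics.IsBigO.of_bound M ?_
  filter_upwards [tendsto_norm_cocompact_atTop.eventually_ge_atTop (max R 1)] with x hx
  rw [norm_eq_abs] at hx
  have hx₀ : 0 < |x| := by linarith [le_max_right R 1]
  rw [norm_eq_abs, norm_eq_abs, abs_of_pos (rpow_pos_of_pos hx₀ _), rpow_neg hx₀.le,
    ← div_eq_mul_inv, le_div_iff₀ (rpow_pos_of_pos hx₀ p), mul_comm]
  exact hM x (le_of_max_le_left hx)

lemma deriv_deriv_exp_neg {V : ℝ → ℝ} (hV : Differentiable ℝ V)
    (hV' : Differentiable ℝ (deriv V)) :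
    deriv (deriv fun y => exp (-V y)) =
      fun x => exp (-V x) * (deriv V x ^ 2 - deriv (deriv V) x) := by
  have h1 : deriv (fun y => exp (-V y)) = fun x => exp (-V x) * -deriv V x :=
    funext fun x => ((hV x).hasDerivAt.neg.exp).deriv
  rw [h1]
  funext x
  rw [(((hV x).hasDerivAt.fun_neg.exp).fun_mul (hV' x).hasDerivAt.fun_neg).deriv]
  ring

lemma enorm_intervalIntegral_le_lintegral_uIoc {E : Type*} [NormedAddCommGroup E]
    [NormedSpace ℝ E] {f : ℝ → E} {a b : ℝ} :
    ‖∫ x in a..b, f x‖ₑ ≤ ∫⁻ x in Ι a b, ‖f x‖ₑ := by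
  calc ‖∫ x in a..b, f x‖ₑ = ‖∫ x in Ι a b, f x‖ₑ := by
        rw [intervalIntegral.intervalIntegral_eq_integral_uIoc]; split_ifs <;> simp
    _ ≤ _ := enorm_integral_le_lintegral_enorm _

lemma sub_eq_intervalIntegral_deriv_add {f : ℝ → ℝ} (hf : ContDiff ℝ 1 f) (x t : ℝ) :
    f (x + t) - f x = ∫ s in 0..t, deriv f (x + s) := by
  rw [intervalIntegral.integral_comp_add_left (deriv f) x, add_zero,
    intervalIntegral.integral_deriv_eq_sub
      (fun y _ => (hf.differentiable one_ne_zero).differentiableAt)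
      ((hf.continuous_deriv le_rfl).intervalIntegrable _ _)]

lemma enorm_sub_le_lintegral_uIoc {f : ℝ → ℝ} (hf : ContDiff ℝ 1 f) (x t : ℝ) :
    ‖f (x + t) - f x‖ₑ ≤ ∫⁻ s in Ι 0 t, ‖deriv f (x + s)‖ₑ := by
  rw [sub_eq_intervalIntegral_deriv_add hf]
  exact enorm_intervalIntegral_le_lintegral_uIoc

lemma uIoc_subset_uIoc_of_mem {t z : ℝ} (ht : t ∈ Ι 0 z) : Ι 0 t ⊆ Ι 0 z :=
  Set.Ioc_subset_Ioc (le_min (min_le_left _ _) ht.1.le) (max_le (le_max_left _ _) ht.2)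

lemma volume_uIoc_zero (z : ℝ) : volume (Ι 0 z) = ‖z‖ₑ := by
  rw [Set.uIoc, Real.volume_Ioc, max_sub_min_eq_abs, sub_zero, Real.enorm_eq_ofReal_abs]

lemma enorm_taylor_remainder_le {g : ℝ → ℝ} (hg : ContDiff ℝ 2 g) (x z : ℝ) :
    ‖g (x + z) - g x - deriv g x * z‖ₑ ≤
      ‖z‖ₑ * ∫⁻ s in Ι 0 z, ‖deriv (deriv g) (x + s)‖ₑ := by
  have hg' : ContDiff ℝ 1 (deriv g) := hg.deriv'
  have hrem : g (x + z) - g x - deriv g x * z = ∫ t in 0..z, (deriv g (x + t) - deriv g x) := by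
    have hc : Continuous fun t => deriv g (x + t) := hg'.continuous.comp (continuous_const_add x)
    rw [intervalIntegral.integral_sub (hc.intervalIntegrable 0 z) intervalIntegrable_const,
      intervalIntegral.integral_const,
      ← sub_eq_intervalIntegral_deriv_add (hg.of_le one_le_two) x z, sub_zero, smul_eq_mul,
      mul_comm]
  calc ‖g (x + z) - g x - deriv g x * z‖ₑ
      ≤ ∫⁻ t in Ι 0 z, ‖deriv g (x + t) - deriv g x‖ₑ := by
        rw [hrem]; exact enorm_intervalIntegral_le_lintegral_uIoc
    _ ≤ ∫⁻ t in Ι 0 z, ∫⁻ s in Ι 0 z, ‖deriv (deriv g) (x + s)‖ₑ :=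
        setLIntegral_mono' measurableSet_uIoc fun t ht =>
          (enorm_sub_le_lintegral_uIoc hg' x t).trans
            (lintegral_mono_set (uIoc_subset_uIoc_of_mem ht))
    _ = ‖z‖ₑ * ∫⁻ s in Ι 0 z, ‖deriv (deriv g) (x + s)‖ₑ := by
        rw [setLIntegral_const, volume_uIoc_zero, mul_comm]

lemma lintegral_enorm_taylor_remainder_le {g : ℝ → ℝ} (hg : ContDiff ℝ 2 g) (z : ℝ) :
    ∫⁻ x, ‖g (x + z) - g x - deriv g x * z‖ₑ ≤ ‖z‖ₑ ^ 2 * ∫⁻ x, ‖deriv (deriv g) x‖ₑ := by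
  have hmeas : Measurable (Function.uncurry fun x s => ‖deriv (deriv g) (x + s)‖ₑ) :=
    ((hg.deriv'.continuous_deriv le_rfl).comp continuous_add).measurable.enorm
  calc ∫⁻ x, ‖g (x + z) - g x - deriv g x * z‖ₑ
      ≤ ∫⁻ x, ‖z‖ₑ * ∫⁻ s in Ι 0 z, ‖deriv (deriv g) (x + s)‖ₑ :=
        lintegral_mono fun x => enorm_taylor_remainder_le hg x z
    _ = ‖z‖ₑ * ∫⁻ s in Ι 0 z, ∫⁻ x, ‖deriv (deriv g) (x + s)‖ₑ := by
        rw [lintegral_const_mul' _ _ enorm_ne_top, lintegral_lintegral_swap hmeas.aemeasurable]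
    _ = ‖z‖ₑ ^ 2 * ∫⁻ x, ‖deriv (deriv g) x‖ₑ := by
        simp_rw [lintegral_add_right_eq_self (fun x => ‖deriv (deriv g) x‖ₑ)]
        rw [setLIntegral_const, volume_uIoc_zero]
        ring

lemma lintegral_enorm_sub_comp_add_le {g : ℝ → ℝ} (hg : Measurable g) (z : ℝ) :
    ∫⁻ x, ‖g (x + z) - g x‖ₑ ≤ 2 * ∫⁻ x, ‖g x‖ₑ := by
  calc ∫⁻ x, ‖g (x + z) - g x‖ₑ ≤ ∫⁻ x, (‖g (x + z)‖ₑ + ‖g x‖ₑ) :=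
        lintegral_mono fun x => enorm_sub_le
    _ = 2 * ∫⁻ x, ‖g x‖ₑ := by
        rw [lintegral_add_right _ hg.enorm,
          lintegral_add_right_eq_self (fun x => ‖g x‖ₑ)]
        ring

noncomputable def fracLapIntegrand (α : ℝ) (g : ℝ → ℝ) (p : ℝ × ℝ) : ℝ :=
  (g (p.1 + p.2) - g p.1 - deriv g p.1 * p.2 * (if |p.2| ≤ 1 then 1 else 0)) *
    |p.2| ^ (-(1 + α))

lemma fracLap1_eq_integral_fracLapIntegrand (α : ℝ) (g : ℝ → ℝ) (x : ℝ) :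
    fracLap1 α g x = -(fracC α * ∫ z, fracLapIntegrand α g (x, z)) := rfl

lemma measurable_fracLapIntegrand {α : ℝ} {g : ℝ → ℝ} (hg : ContDiff ℝ 1 g) :
    Measurable (fracLapIntegrand α g) := by
  have hc := hg.continuous
  have hc' := hg.continuous_deriv le_rfl
  unfold fracLapIntegrand
  refine Measurable.mul ?_ (continuous_abs.measurable.comp measurable_snd |>.pow_const _)
  refine ((hc.comp (continuous_fst.add continuous_snd)).measurable.sub
    (hc.comp continuous_fst).measurable).sub
    (((hc'.comp continuous_fst).measurable.mul measurable_snd).mul ?_)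
  exact Measurable.ite (measurableSet_le (continuous_abs.measurable.comp measurable_snd)
    measurable_const) measurable_const measurable_const

lemma enorm_abs_rpow_mul_enorm_sq_le (α z : ℝ) :
    ‖|z| ^ (-(1 + α))‖ₑ * ‖z‖ₑ ^ 2 ≤ ‖|z| ^ (1 - α)‖ₑ := by
  rcases eq_or_ne z 0 with rfl | hz
  · simp
  rw [← enorm_abs z, ← enorm_pow, ← enorm_mul, ← rpow_natCast, ← rpow_add (abs_pos.2 hz),
    show -(1 + α) + ((2 : ℕ) : ℝ) = 1 - α by push_cast; ring]

lemma lintegral_enorm_fracLapIntegrand_le {α : ℝ} {g : ℝ → ℝ} (hg : ContDiff ℝ 2 g) (z : ℝ) :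
    ∫⁻ x, ‖fracLapIntegrand α g (x, z)‖ₑ ≤
      if |z| ≤ 1 then ‖|z| ^ (1 - α)‖ₑ * ∫⁻ x, ‖deriv (deriv g) x‖ₑ
      else ‖|z| ^ (-(1 + α))‖ₑ * (2 * ∫⁻ x, ‖g x‖ₑ) := by
  simp_rw [fracLapIntegrand, enorm_mul]
  rw [lintegral_mul_const' _ _ enorm_ne_top, mul_comm]
  split_ifs with hz
  · simp_rw [mul_one]
    calc ‖|z| ^ (-(1 + α))‖ₑ * ∫⁻ x, ‖g (x + z) - g x - deriv g x * z‖ₑ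
        ≤ ‖|z| ^ (-(1 + α))‖ₑ * (‖z‖ₑ ^ 2 * ∫⁻ x, ‖deriv (deriv g) x‖ₑ) := by
          gcongr; exact lintegral_enorm_taylor_remainder_le hg z
      _ ≤ ‖|z| ^ (1 - α)‖ₑ * ∫⁻ x, ‖deriv (deriv g) x‖ₑ := by
          rw [← mul_assoc]; gcongr; exact enorm_abs_rpow_mul_enorm_sq_le α z
  · simp_rw [mul_zero, sub_zero]
    gcongr
    exact lintegral_enorm_sub_comp_add_le hg.continuous.measurable z

lemma lintegral_ite_enorm_abs_rpow_lt_top {α : ℝ} (hα₀ : 0 < α) (hα₂ : α < 2) {A B : ENNReal}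
    (hA : A < ⊤) (hB : B < ⊤) :
    ∫⁻ z : ℝ, (if |z| ≤ 1 then ‖|z| ^ (1 - α)‖ₑ * A else ‖|z| ^ (-(1 + α))‖ₑ * B) < ⊤ := by
  have hS : MeasurableSet {z : ℝ | |z| ≤ 1} :=
    measurableSet_le continuous_abs.measurable measurable_const
  have hSc : {z : ℝ | |z| ≤ 1}ᶜ = {z | 1 < |z|} := by ext; simp
  rw [show (fun z : ℝ => if |z| ≤ 1 then ‖|z| ^ (1 - α)‖ₑ * A else ‖|z| ^ (-(1 + α))‖ₑ * B) =
      {z | |z| ≤ 1}.piecewise (fun z => ‖|z| ^ (1 - α)‖ₑ * A)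
        (fun z => ‖|z| ^ (-(1 + α))‖ₑ * B) from rfl,
    lintegral_piecewise hS, hSc, lintegral_mul_const' _ _ hA.ne, lintegral_mul_const' _ _ hB.ne]
  exact ENNReal.add_lt_top.2
    ⟨ENNReal.mul_lt_top (integrableOn_abs_rpow_le_one (by linarith)).2 hA,
      ENNReal.mul_lt_top (integrableOn_abs_rpow_one_lt (by linarith)).2 hB⟩

theorem integrable_fracLap1 {α : ℝ} (hα₀ : 0 < α) (hα₂ : α < 2) {g : ℝ → ℝ}
    (hg : ContDiff ℝ 2 g) (hg_int : Integrable g) (hg''_int : Integrable (deriv (deriv g))) :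
    Integrable (fracLap1 α g) := by
  have hF : Integrable (fracLapIntegrand α g) (volume.prod volume) := by
    refine ⟨(measurable_fracLapIntegrand (hg.of_le one_le_two)).aestronglyMeasurable, ?_⟩
    rw [hasFiniteIntegral_iff_enorm, lintegral_prod_symm _
      (measurable_fracLapIntegrand (hg.of_le one_le_two)).enorm.aemeasurable]
    exact (lintegral_mono (lintegral_enorm_fracLapIntegrand_le hg)).trans_lt
      (lintegral_ite_enorm_abs_rpow_lt_top hα₀ hα₂ hg''_int.2
        (ENNReal.mul_lt_top (by norm_num) hg_int.2))
  simp_rw [funext (fracLap1_eq_integral_fracLapIntegrand α g)]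
  exact (hF.integral_prod_left.const_mul _).neg

theorem stmt_9_general (α : ℝ) (hα : α ∈ Set.Ioc (0 : ℝ) 1)
    (V : ℝ → ℝ) (hV : ContDiff ℝ 2 V)
    (hL1 : Integrable (fun x => Real.exp (-(V x))))
    (hlim : ∃ M R : ℝ, ∀ x : ℝ, R ≤ |x| →
      |x| ^ 3 * Real.exp (-(V x)) * |(deriv V x) ^ 2 - deriv (deriv V) x| ≤ M) :
    Integrable (fun u => fracLap1 α (fun y => Real.exp (-(V y))) u) ∧
      ∀ x : ℝ, IntegrableOn (fun u => fracLap1 α (fun y => Real.exp (-(V y))) u)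
        (Set.Iic x) := by
  obtain ⟨M, R, hM⟩ := hlim
  have hV' : ContDiff ℝ 1 (deriv V) := hV.deriv'
  have hg'' : Integrable (deriv (deriv fun y => exp (-V y))) := by
    rw [deriv_deriv_exp_neg (hV.differentiable two_ne_zero) (hV'.differentiable one_ne_zero)]
    refine integrable_of_abs_rpow_mul_abs_le (M := M) (R := R) (by fun_prop)
      (by norm_num : (1 : ℝ) < 3) fun x hx => ?_
    rw [abs_mul, abs_of_pos (exp_pos _), ← mul_assoc, rpow_ofNat]
    exact hM x hx
  have h := integrable_fracLap1 hα.1 (by linarith [hα.2]) (contDiff_exp.comp hV.neg) hL1 hg''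
  exact ⟨h, fun x => h.integrableOn⟩

theorem stmt_9 (α : ℝ) (hα : α ∈ Set.Ioc (0 : ℝ) 1)
    (V : ℝ → ℝ) (hV : ContDiff ℝ 2 V)
    (hL1 : Integrable (fun x => Real.exp (-(V x))))
    (hCb2 : ∃ M : ℝ, ∀ x : ℝ, Real.exp (-(V x)) ≤ M ∧
      |deriv (fun y => Real.exp (-(V y))) x| ≤ M ∧
      |deriv (deriv (fun y => Real.exp (-(V y)))) x| ≤ M)
    (hlim : ∃ M R : ℝ, ∀ x : ℝ, R ≤ |x| →
      |x| ^ 3 * Real.exp (-(V x)) * |(deriv V x) ^ 2 - deriv (deriv V) x| ≤ M) :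
    Integrable (fun u => fracLap1 α (fun y => Real.exp (-(V y))) u) ∧
      ∀ x : ℝ, IntegrableOn (fun u => fracLap1 α (fun y => Real.exp (-(V y))) u)
        (Set.Iic x) :=
  stmt_9_general α hα V hV hL1 hlim
end
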